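/- Let Δ₁ and Δ₂ be positive definite real k×k matrices, and for a positive definite Δ let f_Δ : ℝ^k → ℝ be the centered Gaussian density f_Δ(x) = (2π)^{-k/2} (det Δ)^{-1/2} exp(−xᵀ Δ⁻¹ x / 2). Let K = ∫ f_{Δ₁} log(f_{Δ₁}/f_{Δ₂}) denote the Kullback–Leibler divergence. Then the Kullback–Leibler variation satisfies ∫_{ℝ^k} f_{Δ₁}(x) ( log(f_{Δ₁}(x)/f_{Δ₂}(x)) − K )² dx = (1/2) tr( (I_k − Δ₂⁻¹ Δ₁)² ). -/

import Mathlib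

open MeasureTheory

/-- The centered `k`-variate Gaussian density with covariance matrix `Δ`:
`f_Δ(x) = (2π)^{-k/2} (det Δ)^{-1/2} exp(−xᵀ Δ⁻¹ x / 2)`. -/
noncomputable def gaussDensity {k : ℕ} (Δ : Matrix (Fin k) (Fin k) ℝ) (x : Fin k → ℝ) : ℝ :=
  (2 * Real.pi) ^ (-(k : ℝ) / 2) * Δ.det ^ (-(1 : ℝ) / 2) *
    Real.exp (-(dotProduct x (Δ⁻¹.mulVec x)) / 2)

/-!
Simultaneously diagonalize the two quadratic forms: with `M = Δ₂⁻¹ - Δ₁⁻¹`, pick `A` with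
`A Aᵀ = Δ₁` and `Aᵀ M A = diag d`. The substitution `x = A z` turns `f_{Δ₁}(x) dx` into the
standard normal distribution of `z` on `ℝᵏ`, and `log (f_{Δ₁}/f_{Δ₂})` into `c + ½ ∑ dᵢ zᵢ²`.
Hence `K = c + ½ ∑ dᵢ`, and the variation is `¼ E (∑ dᵢ (zᵢ² - 1))² = ½ ∑ dᵢ²`, because the
`zᵢ² - 1` are uncorrelated with variance `E z⁴ - 1 = 2`. Finally
`∑ dᵢ² = tr ((Aᵀ M A)²) = tr ((M Δ₁)²)` and `M Δ₁ = Δ₂⁻¹ Δ₁ - 1`.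
-/

open Matrix ProbabilityTheory Real

local notation "φ" => gaussianPDFReal 0 1

lemma gaussianPDFReal_zero_one_apply (t : ℝ) : φ t = (√(2 * π))⁻¹ * exp (-t ^ 2 / 2) := by
  simp [gaussianPDFReal]

lemma hasDerivAt_gaussianPDFReal_zero_one (t : ℝ) : HasDerivAt φ (-t * φ t) t := by
  simp_rw [funext gaussianPDFReal_zero_one_apply]
  have h : HasDerivAt (fun s : ℝ => -s ^ 2 / 2) (-t) t :=
    ((hasDerivAt_pow 2 t).neg.div_const 2).congr_deriv (by ring)
  exact (h.exp.const_mul (√(2 * π))⁻¹).congr_deriv (by ring)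

lemma integrable_pow_mul_gaussianPDFReal_zero_one (n : ℕ) :
    Integrable fun t : ℝ => t ^ n * φ t := by
  have h := (integrable_rpow_mul_exp_neg_mul_sq (b := 1 / 2) (by norm_num)
    (s := n) (by linarith [n.cast_nonneg (α := ℝ)])).const_mul (√(2 * π))⁻¹
  refine h.congr (ae_of_all _ fun t => ?_)
  simp only [rpow_natCast, gaussianPDFReal_zero_one_apply]
  ring_nf

lemma integral_pow_add_two_mul_gaussianPDFReal_zero_one (n : ℕ) :
    ∫ t, t ^ (n + 2) * φ t = (n + 1) * ∫ t, t ^ n * φ t := by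
  have hu (t : ℝ) : HasDerivAt (fun s : ℝ => s ^ (n + 1)) ((n + 1) * t ^ n) t := by
    simpa using hasDerivAt_pow (n + 1) t
  have hv (t : ℝ) : HasDerivAt (fun s => -φ s) (t * φ t) t :=
    (hasDerivAt_gaussianPDFReal_zero_one t).neg.congr_deriv (by ring)
  have hI (m : ℕ) := integrable_pow_mul_gaussianPDFReal_zero_one m
  have := integral_mul_deriv_eq_deriv_mul_of_integrable (fun t _ => hu t) (fun t _ => hv t)
    ((hI (n + 2)).congr (ae_of_all _ fun t => by simp only [Pi.mul_apply]; ring))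
    (((hI n).const_mul (n + 1)).neg.congr
      (ae_of_all _ fun t => by simp only [Pi.mul_apply, Pi.neg_apply]; ring))
    ((hI (n + 1)).neg.congr (ae_of_all _ fun t => by simp only [Pi.mul_apply, Pi.neg_apply]; ring))
  simp only [mul_neg, integral_neg, neg_neg] at this
  rw [← integral_const_mul]
  calc ∫ t, t ^ (n + 2) * φ t
      = ∫ t, t ^ (n + 1) * (t * φ t) := by congr 1 with t; ring
    _ = ∫ t, (n + 1) * t ^ n * φ t := this
    _ = _ := by congr 1 with t; ring

lemma integral_sq_mul_gaussianPDFReal_zero_one : ∫ t, t ^ 2 * φ t = 1 := by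
  simpa [integral_gaussianPDFReal_eq_one] using integral_pow_add_two_mul_gaussianPDFReal_zero_one 0

lemma integral_pow_four_mul_gaussianPDFReal_zero_one : ∫ t, t ^ 4 * φ t = 3 := by
  rw [integral_pow_add_two_mul_gaussianPDFReal_zero_one 2, integral_sq_mul_gaussianPDFReal_zero_one]
  norm_num

lemma integral_sq_sub_one_mul_gaussianPDFReal_zero_one :
    ∫ t, (t ^ 2 - 1) * φ t = 0 := by
  simp_rw [sub_mul, one_mul]
  rw [integral_sub (integrable_pow_mul_gaussianPDFReal_zero_one 2) (integrable_gaussianPDFReal 0 1),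
    integral_sq_mul_gaussianPDFReal_zero_one, integral_gaussianPDFReal_eq_one 0 one_ne_zero,
    sub_self]

lemma integrable_sq_sub_one_sq_mul_gaussianPDFReal_zero_one :
    Integrable fun t : ℝ => (t ^ 2 - 1) ^ 2 * φ t := by
  have expand (t : ℝ) : (t ^ 2 - 1) ^ 2 * φ t = t ^ 4 * φ t - 2 * (t ^ 2 * φ t) + φ t := by
    ring
  simp_rw [expand]
  exact ((integrable_pow_mul_gaussianPDFReal_zero_one 4).sub
    ((integrable_pow_mul_gaussianPDFReal_zero_one 2).const_mul 2)).add
      (integrable_gaussianPDFReal 0 1)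

lemma integral_sq_sub_one_sq_mul_gaussianPDFReal_zero_one :
    ∫ t, (t ^ 2 - 1) ^ 2 * φ t = 2 := by
  have h4 := integrable_pow_mul_gaussianPDFReal_zero_one 4
  have h2 := (integrable_pow_mul_gaussianPDFReal_zero_one 2).const_mul 2
  have expand (t : ℝ) : (t ^ 2 - 1) ^ 2 * φ t = t ^ 4 * φ t - 2 * (t ^ 2 * φ t) + φ t := by
    ring
  simp_rw [expand]
  rw [integral_add ?_ (integrable_gaussianPDFReal 0 1), integral_sub h4 h2,
    integral_const_mul, integral_pow_four_mul_gaussianPDFReal_zero_one,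
    integral_sq_mul_gaussianPDFReal_zero_one, integral_gaussianPDFReal_eq_one 0 one_ne_zero]
  · norm_num
  · exact h4.sub h2

lemma integrable_sq_sub_one_mul_gaussianPDFReal_zero_one :
    Integrable fun t : ℝ => (t ^ 2 - 1) * φ t := by
  simp_rw [sub_mul, one_mul]
  exact (integrable_pow_mul_gaussianPDFReal_zero_one 2).sub (integrable_gaussianPDFReal 0 1)

lemma prod_mulSingle_apply {ι α M : Type*} [Fintype ι] [DecidableEq ι] [CommMonoid M] (i : ι)
    (g : α → M) (z : ι → α) : ∏ t, Pi.mulSingle (M := fun _ => α → M) i g t (z t) = g (z i) := by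
  rw [Finset.prod_eq_single i (fun t _ ht => by simp [ht]) (by simp)]
  simp

noncomputable def stdGaussianPDF {ι : Type*} [Fintype ι] (z : ι → ℝ) : ℝ :=
  ∏ i, φ (z i)

section StdGaussianPDF

variable {ι : Type*} [Fintype ι]

lemma integral_prod_mul_stdGaussianPDF (g : ι → ℝ → ℝ) :
    ∫ z, (∏ i, g i (z i)) * stdGaussianPDF z = ∏ i, ∫ t, g i t * φ t := by
  simp_rw [stdGaussianPDF, ← Finset.prod_mul_distrib]
  exact integral_fintype_prod_volume_eq_prod fun i t => g i t * φ t

lemma integrable_prod_mul_stdGaussianPDF {g : ι → ℝ → ℝ}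
    (hg : ∀ i, Integrable fun t => g i t * φ t) :
    Integrable fun z : ι → ℝ => (∏ i, g i (z i)) * stdGaussianPDF z := by
  simp_rw [stdGaussianPDF, ← Finset.prod_mul_distrib]
  exact Integrable.fintype_prod (f := fun i t => g i t * φ t) hg

lemma integral_stdGaussianPDF : ∫ z : ι → ℝ, stdGaussianPDF z = 1 := by
  simpa [integral_gaussianPDFReal_eq_one] using
    integral_prod_mul_stdGaussianPDF (ι := ι) fun _ _ => 1

lemma integrable_stdGaussianPDF : Integrable (stdGaussianPDF (ι := ι)) := by
  simpa using integrable_prod_mul_stdGaussianPDF (ι := ι) (g := fun _ _ => 1)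
    fun _ => by simpa using integrable_gaussianPDFReal 0 1

lemma integral_comp_eval_mul_stdGaussianPDF (i : ι) (g : ℝ → ℝ) :
    ∫ z, g (z i) * stdGaussianPDF z = ∫ t, g t * φ t := by
  classical
  have := integral_prod_mul_stdGaussianPDF (Pi.mulSingle i g)
  simp only [prod_mulSingle_apply] at this
  rw [this, Finset.prod_eq_single i (fun t _ ht => by simp [ht, integral_gaussianPDFReal_eq_one])
    (by simp)]
  simp

lemma integrable_comp_eval_mul_stdGaussianPDF (i : ι) {g : ℝ → ℝ}
    (hg : Integrable fun t => g t * φ t) :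
    Integrable fun z : ι → ℝ => g (z i) * stdGaussianPDF z := by
  classical
  have := integrable_prod_mul_stdGaussianPDF (g := Pi.mulSingle i g) fun t => by
    by_cases ht : t = i
    · subst ht; simpa using hg
    · simpa [ht] using integrable_gaussianPDFReal 0 1
  simpa only [prod_mulSingle_apply] using this

lemma integral_comp_eval_mul_comp_eval_mul_stdGaussianPDF {i j : ι} (hij : i ≠ j) (g h : ℝ → ℝ) :
    ∫ z, g (z i) * h (z j) * stdGaussianPDF z =
      (∫ t, g t * φ t) * ∫ t, h t * φ t := by
  classical
  have := integral_prod_mul_stdGaussianPDF (Pi.mulSingle i g * Pi.mulSingle j h)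
  simp only [Pi.mul_apply, Finset.prod_mul_distrib, prod_mulSingle_apply] at this
  rw [this, Finset.prod_eq_mul_of_mem i j (Finset.mem_univ _) (Finset.mem_univ _) hij
    (fun t _ ht => by simp [ht.1, ht.2, integral_gaussianPDFReal_eq_one])]
  simp [hij, hij.symm]

lemma integrable_comp_eval_mul_comp_eval_mul_stdGaussianPDF {i j : ι} (hij : i ≠ j) {g h : ℝ → ℝ}
    (hg : Integrable fun t => g t * φ t)
    (hh : Integrable fun t => h t * φ t) :
    Integrable fun z : ι → ℝ => g (z i) * h (z j) * stdGaussianPDF z := by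
  classical
  have := integrable_prod_mul_stdGaussianPDF (g := Pi.mulSingle i g * Pi.mulSingle j h) fun t => by
    by_cases hti : t = i
    · subst hti; simpa [hij] using hg
    by_cases htj : t = j
    · subst htj; simpa [hti] using hh
    simpa [hti, htj] using integrable_gaussianPDFReal 0 1
  simpa only [Pi.mul_apply, Finset.prod_mul_distrib, prod_mulSingle_apply] using this

lemma integral_sq_sub_one_mul_sq_sub_one_mul_stdGaussianPDF [DecidableEq ι] (i j : ι) :
    ∫ z, (z i ^ 2 - 1) * (z j ^ 2 - 1) * stdGaussianPDF z = if i = j then 2 else 0 := by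
  split_ifs with hij
  · subst hij
    simp_rw [← pow_two]
    rw [integral_comp_eval_mul_stdGaussianPDF i fun t => (t ^ 2 - 1) ^ 2,
      integral_sq_sub_one_sq_mul_gaussianPDFReal_zero_one]
  · rw [integral_comp_eval_mul_comp_eval_mul_stdGaussianPDF hij (fun t => t ^ 2 - 1)
      (fun t => t ^ 2 - 1), integral_sq_sub_one_mul_gaussianPDFReal_zero_one, zero_mul]

lemma integrable_sq_sub_one_mul_sq_sub_one_mul_stdGaussianPDF (i j : ι) :
    Integrable fun z : ι → ℝ => (z i ^ 2 - 1) * (z j ^ 2 - 1) * stdGaussianPDF z := by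
  by_cases hij : i = j
  · subst hij
    simp_rw [← pow_two]
    exact integrable_comp_eval_mul_stdGaussianPDF i
      integrable_sq_sub_one_sq_mul_gaussianPDFReal_zero_one
  · exact integrable_comp_eval_mul_comp_eval_mul_stdGaussianPDF hij
      integrable_sq_sub_one_mul_gaussianPDFReal_zero_one
      integrable_sq_sub_one_mul_gaussianPDFReal_zero_one

lemma integral_add_sum_mul_sq_mul_stdGaussianPDF (a : ℝ) (d : ι → ℝ) :
    ∫ z, (a + ∑ i, d i * z i ^ 2) * stdGaussianPDF z = a + ∑ i, d i := by
  have hsq (i : ι) : Integrable fun z : ι → ℝ => d i * (z i ^ 2 * stdGaussianPDF z) :=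
    (integrable_comp_eval_mul_stdGaussianPDF i
      (integrable_pow_mul_gaussianPDFReal_zero_one 2)).const_mul _
  have hmoment (i : ι) : ∫ z : ι → ℝ, z i ^ 2 * stdGaussianPDF z = 1 :=
    (integral_comp_eval_mul_stdGaussianPDF i fun t => t ^ 2).trans
      integral_sq_mul_gaussianPDFReal_zero_one
  simp_rw [add_mul, Finset.sum_mul, mul_assoc]
  rw [integral_add (integrable_stdGaussianPDF.const_mul a)
      (integrable_finsetSum _ fun i _ => hsq i),
    integral_const_mul, integral_stdGaussianPDF, integral_finsetSum _ fun i _ => hsq i]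
  simp [integral_const_mul, hmoment]

lemma integral_sum_mul_sq_sub_one_sq_mul_stdGaussianPDF (d : ι → ℝ) :
    ∫ z, (∑ i, d i * (z i ^ 2 - 1)) ^ 2 * stdGaussianPDF z = 2 * ∑ i, d i ^ 2 := by
  classical
  have hint (i j : ι) :=
    (integrable_sq_sub_one_mul_sq_sub_one_mul_stdGaussianPDF i j).const_mul (d i * d j)
  have expand (z : ι → ℝ) : (∑ i, d i * (z i ^ 2 - 1)) ^ 2 * stdGaussianPDF z =
      ∑ i, ∑ j, d i * d j * ((z i ^ 2 - 1) * (z j ^ 2 - 1) * stdGaussianPDF z) := by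
    simp_rw [sq, Finset.sum_mul_sum, Finset.sum_mul]
    exact Finset.sum_congr rfl fun i _ => Finset.sum_congr rfl fun j _ => by ring
  simp_rw [expand]
  rw [integral_finsetSum _ fun i _ => integrable_finsetSum _ fun j _ => hint i j]
  simp_rw [integral_finsetSum _ fun j _ => hint _ j, integral_const_mul,
    integral_sq_sub_one_mul_sq_sub_one_mul_stdGaussianPDF]
  simp [Finset.mul_sum, sq, mul_comm]

end StdGaussianPDF

lemma mulVec_dotProduct_mulVec_mulVec {m n R : Type*} [Fintype m] [Fintype n] [CommSemiring R]
    (A : Matrix m n R) (B : Matrix m m R) (z : n → R) :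
    (A *ᵥ z) ⬝ᵥ (B *ᵥ (A *ᵥ z)) = z ⬝ᵥ ((Aᵀ * B * A) *ᵥ z) := by
  rw [mulVec_mulVec, dotProduct_mulVec z, Matrix.mul_assoc, ← vecMul_vecMul, vecMul_transpose,
    ← dotProduct_mulVec]

section LinearAlgebra

variable {ι : Type*} [Fintype ι] [DecidableEq ι]

open scoped MatrixOrder in
theorem exists_mul_transpose_eq_and_transpose_mul_mul_eq_diagonal {Δ M : Matrix ι ι ℝ}
    (hΔ : Δ.PosSemidef) (hM : M.IsHermitian) :
    ∃ (A : Matrix ι ι ℝ) (d : ι → ℝ), A * Aᵀ = Δ ∧ Aᵀ * M * A = diagonal d := by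
  obtain ⟨B, rfl⟩ := CStarAlgebra.nonneg_iff_eq_star_mul_self.mp hΔ.nonneg
  have hN : (B * M * Bᵀ).IsHermitian := by
    simpa only [conjTranspose_eq_transpose_of_trivial] using isHermitian_mul_mul_conjTranspose B hM
  let U : Matrix ι ι ℝ := hN.eigenvectorUnitary
  have hUU : U * Uᵀ = 1 := by
    have := Unitary.coe_mul_star_self hN.eigenvectorUnitary
    rwa [Unitary.coe_star, star_eq_conjTranspose, conjTranspose_eq_transpose_of_trivial] at this
  refine ⟨Bᵀ * U, hN.eigenvalues, ?_, ?_⟩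
  · rw [transpose_mul, transpose_transpose, Matrix.mul_assoc, ← Matrix.mul_assoc U, hUU,
      Matrix.one_mul, star_eq_conjTranspose, conjTranspose_eq_transpose_of_trivial]
  · have key := hN.conjStarAlgAut_star_eigenvectorUnitary
    rw [Unitary.conjStarAlgAut_star_apply] at key
    simpa [U, star_eq_conjTranspose, conjTranspose_eq_transpose_of_trivial, Matrix.mul_assoc]
      using key

lemma trace_mul_pow_comm {R : Type*} [CommRing R]
    (X Y : Matrix ι ι R) (n : ℕ) : ((X * Y) ^ n).trace = ((Y * X) ^ n).trace := by
  cases n with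
  | zero => simp
  | succ n =>
    rw [pow_succ, ← Matrix.mul_assoc, mul_pow_mul, Matrix.mul_assoc, trace_mul_comm, pow_succ,
      Matrix.mul_assoc]

variable {A M : Matrix ι ι ℝ} {d : ι → ℝ}

lemma mulVec_dotProduct_mulVec_mulVec_eq_sum (hd : Aᵀ * M * A = diagonal d) (z : ι → ℝ) :
    (A *ᵥ z) ⬝ᵥ (M *ᵥ (A *ᵥ z)) = ∑ i, d i * z i ^ 2 := by
  rw [mulVec_dotProduct_mulVec_mulVec, hd]
  simp only [dotProduct, mulVec_diagonal]
  exact Finset.sum_congr rfl fun i _ => by ring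

lemma trace_mul_mul_transpose_pow_eq_sum (hd : Aᵀ * M * A = diagonal d) (n : ℕ) :
    ((M * (A * Aᵀ)) ^ n).trace = ∑ i, d i ^ n := by
  rw [← Matrix.mul_assoc, trace_mul_pow_comm, ← Matrix.mul_assoc, hd, diagonal_pow, trace_diagonal]
  rfl

end LinearAlgebra

theorem integral_comp_mulVec {ι E : Type*} [Fintype ι] [DecidableEq ι] [NormedAddCommGroup E]
    [NormedSpace ℝ E] {A : Matrix ι ι ℝ} (hA : A.det ≠ 0) (F : (ι → ℝ) → E) :
    ∫ z, F (A *ᵥ z) = |A.det|⁻¹ • ∫ x, F x := by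
  let e := (LinearMap.equivOfDetNeZero (toLin' A)
    (by rwa [LinearMap.det_toLin'])).toContinuousLinearEquiv.toHomeomorph.toMeasurableEquiv
  have he : Measure.map e volume = ENNReal.ofReal |A.det⁻¹| • volume :=
    Real.map_matrix_volume_pi_eq_smul_volume_pi hA
  calc ∫ z, F (A *ᵥ z) = ∫ z, F (e z) := rfl
    _ = |A.det|⁻¹ • ∫ x, F x := by
      rw [← integral_map_equiv, he, integral_smul_measure, ENNReal.toReal_ofReal (abs_nonneg _),
        abs_inv]

lemma gaussDensity_one {k : ℕ} (z : Fin k → ℝ) : gaussDensity 1 z = stdGaussianPDF z := by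
  have h2π : (2 * π) ^ (-(k : ℝ) / 2) = (√(2 * π))⁻¹ ^ k := by
    rw [sqrt_eq_rpow, ← rpow_neg (by positivity), ← rpow_natCast, ← rpow_mul (by positivity)]
    ring_nf
  have hexp : exp (-(z ⬝ᵥ z) / 2) = ∏ i, exp (-z i ^ 2 / 2) := by
    rw [← exp_sum, ← Finset.sum_div, Finset.sum_neg_distrib]
    simp [dotProduct, sq]
  simp only [gaussDensity, stdGaussianPDF, gaussianPDFReal_zero_one_apply, Finset.prod_mul_distrib,
    inv_one, one_mulVec, det_one, one_rpow, mul_one, hexp, h2π, Finset.prod_const, Finset.card_univ,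
    Fintype.card_fin]

lemma gaussDensity_pos {k : ℕ} {Δ : Matrix (Fin k) (Fin k) ℝ} (hΔ : 0 < Δ.det) (x : Fin k → ℝ) :
    0 < gaussDensity Δ x := by
  unfold gaussDensity
  positivity

lemma abs_det_mul_gaussDensity_mul_transpose {k : ℕ} {A : Matrix (Fin k) (Fin k) ℝ}
    (hA : A.det ≠ 0) (z : Fin k → ℝ) :
    |A.det| * gaussDensity (A * Aᵀ) (A *ᵥ z) = gaussDensity 1 z := by
  have hquad : Aᵀ * (A * Aᵀ)⁻¹ * A = 1 := by
    rw [Matrix.mul_inv_rev, ← Matrix.mul_assoc Aᵀ,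
      mul_nonsing_inv _ (by rwa [det_transpose, isUnit_iff_ne_zero]), Matrix.one_mul,
      nonsing_inv_mul _ (isUnit_iff_ne_zero.mpr hA)]
  have hdet : (A * Aᵀ).det ^ (-(1 : ℝ) / 2) = |A.det|⁻¹ := by
    rw [det_mul, det_transpose, ← sq, ← sq_abs, ← rpow_natCast, ← rpow_mul (abs_nonneg _)]
    norm_num [rpow_neg_one]
  simp only [gaussDensity, mulVec_dotProduct_mulVec_mulVec, hquad, hdet, inv_one, det_one, one_rpow]
  field_simp

theorem integral_gaussDensity_mul_transpose_mul {k : ℕ} {A : Matrix (Fin k) (Fin k) ℝ}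
    (hA : A.det ≠ 0) (F : (Fin k → ℝ) → ℝ) :
    ∫ x, gaussDensity (A * Aᵀ) x * F x = ∫ z, F (A *ᵥ z) * stdGaussianPDF z := by
  calc ∫ x, gaussDensity (A * Aᵀ) x * F x
      = |A.det| * ∫ z, gaussDensity (A * Aᵀ) (A *ᵥ z) * F (A *ᵥ z) := by
        rw [integral_comp_mulVec hA fun x => gaussDensity (A * Aᵀ) x * F x, smul_eq_mul,
          ← mul_assoc, mul_inv_cancel₀ (abs_ne_zero.mpr hA), one_mul]
    _ = ∫ z, F (A *ᵥ z) * stdGaussianPDF z := by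
        rw [← integral_const_mul]
        congr 1 with z
        rw [← gaussDensity_one, ← abs_det_mul_gaussDensity_mul_transpose hA]
        ring

theorem integral_gaussDensity_mul_add_mul_quadForm {k : ℕ} {Δ M : Matrix (Fin k) (Fin k) ℝ}
    (hΔ : Δ.PosDef) (hM : M.IsHermitian) (a b : ℝ) :
    ∫ x, gaussDensity Δ x * (a + b * (x ⬝ᵥ (M *ᵥ x))) = a + b * (M * Δ).trace := by
  obtain ⟨A, d, rfl, hd⟩ :=
    exists_mul_transpose_eq_and_transpose_mul_mul_eq_diagonal hΔ.posSemidef hM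
  have hA : A.det ≠ 0 := fun h => hΔ.det_pos.ne' (by simp [det_mul, h])
  have htr : (M * (A * Aᵀ)).trace = ∑ i, d i := by
    simpa using trace_mul_mul_transpose_pow_eq_sum hd 1
  rw [integral_gaussDensity_mul_transpose_mul hA, htr, Finset.mul_sum]
  simp_rw [mulVec_dotProduct_mulVec_mulVec_eq_sum hd, Finset.mul_sum, ← mul_assoc]
  simpa using integral_add_sum_mul_sq_mul_stdGaussianPDF a (fun i => b * d i)

theorem integral_gaussDensity_mul_quadForm_sub_trace_sq {k : ℕ} {Δ M : Matrix (Fin k) (Fin k) ℝ}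
    (hΔ : Δ.PosDef) (hM : M.IsHermitian) :
    ∫ x, gaussDensity Δ x * (x ⬝ᵥ (M *ᵥ x) - (M * Δ).trace) ^ 2 = 2 * ((M * Δ) ^ 2).trace := by
  obtain ⟨A, d, rfl, hd⟩ :=
    exists_mul_transpose_eq_and_transpose_mul_mul_eq_diagonal hΔ.posSemidef hM
  have hA : A.det ≠ 0 := fun h => hΔ.det_pos.ne' (by simp [det_mul, h])
  have htr : (M * (A * Aᵀ)).trace = ∑ i, d i := by
    simpa using trace_mul_mul_transpose_pow_eq_sum hd 1
  rw [integral_gaussDensity_mul_transpose_mul hA, htr, trace_mul_mul_transpose_pow_eq_sum hd,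
    ← integral_sum_mul_sq_sub_one_sq_mul_stdGaussianPDF]
  congr 1 with z
  rw [mulVec_dotProduct_mulVec_mulVec_eq_sum hd, ← Finset.sum_sub_distrib]
  simp_rw [mul_sub, mul_one]

lemma log_gaussDensity {k : ℕ} {Δ : Matrix (Fin k) (Fin k) ℝ} (hΔ : 0 < Δ.det) (x : Fin k → ℝ) :
    log (gaussDensity Δ x) = -(k / 2) * log (2 * π) - log Δ.det / 2 - x ⬝ᵥ (Δ⁻¹ *ᵥ x) / 2 := by
  rw [gaussDensity, log_mul (by positivity) (exp_pos _).ne',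
    log_mul (by positivity) (by positivity), log_rpow (by positivity), log_rpow hΔ, log_exp]
  ring

lemma log_gaussDensity_div_gaussDensity {k : ℕ} {Δ₁ Δ₂ : Matrix (Fin k) (Fin k) ℝ}
    (h₁ : 0 < Δ₁.det) (h₂ : 0 < Δ₂.det) (x : Fin k → ℝ) :
    log (gaussDensity Δ₁ x / gaussDensity Δ₂ x) =
      (log Δ₂.det - log Δ₁.det) / 2 + 1 / 2 * (x ⬝ᵥ ((Δ₂⁻¹ - Δ₁⁻¹) *ᵥ x)) := by
  rw [log_div (gaussDensity_pos h₁ x).ne' (gaussDensity_pos h₂ x).ne', log_gaussDensity h₁,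
    log_gaussDensity h₂, sub_mulVec, dotProduct_sub]
  ring

/-- Kullback–Leibler variation between two centered Gaussians: with
`K = ∫ f_{Δ₁} log(f_{Δ₁}/f_{Δ₂})` the Kullback–Leibler divergence, one has
`∫ f_{Δ₁} (log(f_{Δ₁}/f_{Δ₂}) − K)² = (1/2) tr((I − Δ₂⁻¹ Δ₁)²)`. -/
theorem stmt17 (k : ℕ) (Δ₁ Δ₂ : Matrix (Fin k) (Fin k) ℝ)
    (h1 : Δ₁.PosDef) (h2 : Δ₂.PosDef) (K : ℝ)
    (hK : K = ∫ x : Fin k → ℝ,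
        gaussDensity Δ₁ x * Real.log (gaussDensity Δ₁ x / gaussDensity Δ₂ x)) :
    (∫ x : Fin k → ℝ,
        gaussDensity Δ₁ x * (Real.log (gaussDensity Δ₁ x / gaussDensity Δ₂ x) - K) ^ 2) =
      (1 / 2) * (((1 : Matrix (Fin k) (Fin k) ℝ) - Δ₂⁻¹ * Δ₁) ^ 2).trace := by
  set M := Δ₂⁻¹ - Δ₁⁻¹
  set c := (log Δ₂.det - log Δ₁.det) / 2
  have hM : M.IsHermitian := h2.posSemidef.inv.isHermitian.sub h1.posSemidef.inv.isHermitian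
  have hlog := log_gaussDensity_div_gaussDensity h1.det_pos h2.det_pos
  have hKval : K = c + 1 / 2 * (M * Δ₁).trace := by
    simp_rw [hK, hlog]
    exact integral_gaussDensity_mul_add_mul_quadForm h1 hM c (1 / 2)
  have hMΔ₁ : 1 - Δ₂⁻¹ * Δ₁ = -(M * Δ₁) := by
    rw [sub_mul, nonsing_inv_mul _ (isUnit_iff_ne_zero.mpr h1.det_pos.ne'), neg_sub]
  calc ∫ x, gaussDensity Δ₁ x * (log (gaussDensity Δ₁ x / gaussDensity Δ₂ x) - K) ^ 2
      = ∫ x, 1 / 4 * (gaussDensity Δ₁ x * (x ⬝ᵥ (M *ᵥ x) - (M * Δ₁).trace) ^ 2) := by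
        congr 1 with x
        rw [hlog, hKval]
        ring
    _ = _ := by
        rw [integral_const_mul, integral_gaussDensity_mul_quadForm_sub_trace_sq h1 hM, hMΔ₁, neg_sq]
        ring
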